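/- arXiv:0911.3786 — 3 statements merged into one kernel-verified Lean document; each statement's English description precedes it below -/
import Mathlib

section
/- In the pushout of a graph monomorphism d : K → D along a graph morphism r : K → R (with D = (K + K̄) +ₑ K̃, H = (R + K̄) +ₑ R̃), for all nodes n_H, p_H of H the set of linking edges R̃(n_H, p_H) is in bijection with the disjoint union, over n_D ∈ r₁⁻¹(n_H) and p_D ∈ r₁⁻¹(p_H), of the sets K̃(n_D, p_D) of linking edges of D. -/
universe u

structure MGraph : Type (u + 1) where
  N : Type u
  E : Type u
  src : E → N
  tgt : E → N

@[ext]
structure GraphHom (X Y : MGraph.{u}) where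
  fN : X.N → Y.N
  fE : X.E → Y.E
  hsrc : ∀ e, Y.src (fE e) = fN (X.src e)
  htgt : ∀ e, Y.tgt (fE e) = fN (X.tgt e)

def GraphHom.id (X : MGraph.{u}) : GraphHom X X :=
  ⟨_root_.id, _root_.id, fun _ => rfl, fun _ => rfl⟩

/-- `g.comp f` is the composite `g ∘ f`. -/
def GraphHom.comp {X Y Z : MGraph.{u}} (g : GraphHom Y Z) (f : GraphHom X Y) :
    GraphHom X Z :=
  ⟨g.fN ∘ f.fN, g.fE ∘ f.fE,
    fun e => by simp [Function.comp, g.hsrc, f.hsrc],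
    fun e => by simp [Function.comp, g.htgt, f.htgt]⟩

section
/- Decomposition data: `D = (K + Kbar) +ₑ Kt`, with `Kt` the linking edges,
   given by their source/target functions into the nodes of `K + Kbar`. -/
variable (K R Kbar : MGraph.{u}) (r : GraphHom K R)
variable (Kt : Type u) (ks kt : Kt → K.N ⊕ Kbar.N)

/-- The graph `D = (K + Kbar) +ₑ Kt`. -/
def Dgr : MGraph.{u} where
  N := K.N ⊕ Kbar.N
  E := K.E ⊕ Kbar.E ⊕ Kt
  src := Sum.elim (Sum.inl ∘ K.src) (Sum.elim (Sum.inr ∘ Kbar.src) ks)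
  tgt := Sum.elim (Sum.inl ∘ K.tgt) (Sum.elim (Sum.inr ∘ Kbar.tgt) kt)

/-- The canonical inclusion (a monomorphism) `d : K → D`. -/
def dmor : GraphHom K (Dgr K Kbar Kt ks kt) :=
  ⟨Sum.inl, Sum.inl, fun _ => rfl, fun _ => rfl⟩

/-- The graph `H = (R + Kbar) +ₑ Rt`, where `Rt ≅ Kt` consists of one edge
`(e, n_K, p_K) : r₁ n_K → r₁ p_K` for each linking edge `e : n_K → p_K` in `Kt`. -/
def Hgr : MGraph.{u} where
  N := R.N ⊕ Kbar.N
  E := R.E ⊕ Kbar.E ⊕ Kt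
  src := Sum.elim (Sum.inl ∘ R.src)
    (Sum.elim (Sum.inr ∘ Kbar.src) (Sum.map r.fN _root_.id ∘ ks))
  tgt := Sum.elim (Sum.inl ∘ R.tgt)
    (Sum.elim (Sum.inr ∘ Kbar.tgt) (Sum.map r.fN _root_.id ∘ kt))

/-- The canonical inclusion `h : R → H`. -/
def hmor : GraphHom R (Hgr K R Kbar r Kt ks kt) :=
  ⟨Sum.inl, Sum.inl, fun _ => rfl, fun _ => rfl⟩

/-- The morphism `r₁ = (r + id) +ₑ r̃ : D → H`. -/
def r1mor : GraphHom (Dgr K Kbar Kt ks kt) (Hgr K R Kbar r Kt ks kt) where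
  fN := Sum.map r.fN _root_.id
  fE := Sum.map r.fE _root_.id
  hsrc := by rintro (e | e | e) <;> simp [Dgr, Hgr, r.hsrc]
  htgt := by rintro (e | e | e) <;> simp [Dgr, Hgr, r.htgt]

end

/-! The linking edges of `H` are those of `D`, with their endpoints pushed along `r₁` on nodes,
so sorting the ones over `(n_H, p_H)` by their endpoints in `D` is a plain fibre decomposition. -/

def Equiv.subtypeFiberEndpointsSigma {E α β : Type*} (f : α → β) (s t : E → α) (b c : β) :
    {e : E // f (s e) = b ∧ f (t e) = c} ≃
      Σ (a : {a : α // f a = b}) (a' : {a' : α // f a' = c}), {e : E // s e = a ∧ t e = a'} where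
  toFun e := ⟨⟨s e, e.2.1⟩, ⟨t e, e.2.2⟩, ⟨e, rfl, rfl⟩⟩
  invFun x := ⟨x.2.2, by rw [x.2.2.2.1, x.1.2], by rw [x.2.2.2.2, x.2.1.2]⟩
  left_inv _ := rfl
  right_inv := by
    rintro ⟨⟨_, _⟩, ⟨_, _⟩, e, hs, ht⟩
    cases hs
    cases ht
    rfl

theorem graph_pushout_linking_edges (K R Kbar : MGraph.{u}) (r : GraphHom K R)
    (Kt : Type u) (ks kt : Kt → K.N ⊕ Kbar.N)
    (nH pH : (Hgr K R Kbar r Kt ks kt).N) :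
    Nonempty
      ({e : Kt // Sum.map r.fN _root_.id (ks e) = nH ∧
                  Sum.map r.fN _root_.id (kt e) = pH} ≃
       Σ (nD : {n : K.N ⊕ Kbar.N // Sum.map r.fN _root_.id n = nH})
         (pD : {p : K.N ⊕ Kbar.N // Sum.map r.fN _root_.id p = pH}),
         {e : Kt // ks e = nD.1 ∧ kt e = pD.1}) :=
  ⟨Equiv.subtypeFiberEndpointsSigma _ ks kt nH pH⟩
end

section
/- Let l : K → L be a graph morphism and m : L → G a graph monomorphism, with G = (L + L̄) +ₑ L̃. For any graph K̄, any graph morphism l̄ : K̄ → L̄, any edge-set K̃ on nodes of K + K̄, and any graph morphism l̃ : K̃ → L̃ agreeing with l + l̄ on nodes, the square with D = (K + K̄) +ₑ K̃, d the canonical inclusion, and l₁ = (l + l̄) +ₑ l̃, is a pullback complement of (m, l) in the category of graphs; moreover every pullback complement of (m, l) has this form up to isomorphism. -/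
universe u

section
variable (X Xbar : MGraph.{u}) (Xt : Type u) (xs xt : Xt → X.N ⊕ Xbar.N)

/-- The graph `(X + Xbar) +ₑ Xt` built from decomposition data. -/
def sumGraph : MGraph.{u} where
  N := X.N ⊕ Xbar.N
  E := X.E ⊕ Xbar.E ⊕ Xt
  src := Sum.elim (Sum.inl ∘ X.src) (Sum.elim (Sum.inr ∘ Xbar.src) xs)
  tgt := Sum.elim (Sum.inl ∘ X.tgt) (Sum.elim (Sum.inr ∘ Xbar.tgt) xt)

/-- The canonical inclusion (a monomorphism) `X → (X + Xbar) +ₑ Xt`. -/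
def sumIncl : GraphHom X (sumGraph X Xbar Xt xs xt) :=
  ⟨Sum.inl, Sum.inl, fun _ => rfl, fun _ => rfl⟩

end

section
variable (K L Lbar : MGraph.{u}) (l : GraphHom K L)
variable (Lt : Type u) (ls lt : Lt → L.N ⊕ Lbar.N)
variable (Kbar : MGraph.{u}) (lbar : GraphHom Kbar Lbar)
variable (Kt : Type u) (ks kt : Kt → K.N ⊕ Kbar.N) (ltil : Kt → Lt)
variable (hls : ∀ e, ls (ltil e) = Sum.map l.fN lbar.fN (ks e))
variable (hlt : ∀ e, lt (ltil e) = Sum.map l.fN lbar.fN (kt e))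

/-- The morphism `l₁ = (l + lbar) +ₑ l̃ : (K + Kbar) +ₑ Kt → (L + Lbar) +ₑ Lt`. -/
def pbcMor : GraphHom (sumGraph K Kbar Kt ks kt) (sumGraph L Lbar Lt ls lt) where
  fN := Sum.map l.fN lbar.fN
  fE := Sum.map l.fE (Sum.map lbar.fE ltil)
  hsrc := by rintro (e | e | e) <;> simp [sumGraph, l.hsrc, lbar.hsrc, hls]
  htgt := by rintro (e | e | e) <;> simp [sumGraph, l.htgt, lbar.htgt, hlt]

end

/-!
The morphism `l₁ = (l + l̄) +ₑ l̃` sends each summand of `(K + K̄) +ₑ K̃` into the matching summand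
of `(L + L̄) +ₑ L̃`, so anything mapped by `l₁` into `L` already lies in `K`: this makes the square
a pullback. Conversely, testing the pullback property against the one-node and the one-edge graph
shows that `d` maps `K` bijectively onto the part of `D` lying over `L`. The rest of `D` splits
along `l₁` into the part `K̄` over `L̄` and the edges `K̃` over `L̃`, and reassembling these pieces
gives a morphism `(K + K̄) +ₑ K̃ → D` that is bijective on nodes and on edges, hence an isomorphism.
-/

open Function

namespace GraphHom

variable {W X Y Z : MGraph.{u}}

theorem comp_assoc (h : GraphHom Y Z) (g : GraphHom X Y) (f : GraphHom W X) :
    (h.comp g).comp f = h.comp (g.comp f) :=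
  rfl

theorem id_comp (f : GraphHom X Y) : (GraphHom.id Y).comp f = f :=
  rfl

theorem comp_id (f : GraphHom X Y) : f.comp (GraphHom.id X) = f :=
  rfl

theorem cancel_left_of_injective {f : GraphHom Y Z} (hN : Injective f.fN) (hE : Injective f.fE)
    {g h : GraphHom X Y} (hfgh : f.comp g = f.comp h) : g = h :=
  GraphHom.ext (hN.comp_left (congrArg GraphHom.fN hfgh))
    (hE.comp_left (congrArg GraphHom.fE hfgh))

noncomputable def invOfBijective (f : GraphHom X Y) (hN : Bijective f.fN)
    (hE : Bijective f.fE) : GraphHom Y X where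
  fN := (Equiv.ofBijective _ hN).symm
  fE := (Equiv.ofBijective _ hE).symm
  hsrc e := hN.1 <| by
    simp only [← f.hsrc, Equiv.ofBijective_apply_symm_apply]
  htgt e := hN.1 <| by
    simp only [← f.htgt, Equiv.ofBijective_apply_symm_apply]

theorem comp_invOfBijective (f : GraphHom X Y) (hN : Bijective f.fN) (hE : Bijective f.fE) :
    f.comp (f.invOfBijective hN hE) = GraphHom.id Y :=
  GraphHom.ext (funext (Equiv.ofBijective _ hN).apply_symm_apply)
    (funext (Equiv.ofBijective _ hE).apply_symm_apply)

theorem invOfBijective_comp (f : GraphHom X Y) (hN : Bijective f.fN) (hE : Bijective f.fE) :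
    (f.invOfBijective hN hE).comp f = GraphHom.id X :=
  GraphHom.ext (funext (Equiv.ofBijective _ hN).symm_apply_apply)
    (funext (Equiv.ofBijective _ hE).symm_apply_apply)

theorem invOfBijective_comp_eq {f : GraphHom X Y} (hN : Bijective f.fN) (hE : Bijective f.fE)
    {g : GraphHom W Y} {h : GraphHom W X} (hfh : f.comp h = g) :
    (f.invOfBijective hN hE).comp g = h := by
  rw [← hfh, ← comp_assoc, invOfBijective_comp, id_comp]

theorem comp_invOfBijective_eq {f : GraphHom X Y} (hN : Bijective f.fN) (hE : Bijective f.fE)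
    {g : GraphHom X Z} {h : GraphHom Y Z} (hgf : g = h.comp f) :
    g.comp (f.invOfBijective hN hE) = h := by
  rw [hgf, comp_assoc, comp_invOfBijective, comp_id]

end GraphHom

section Pullback

variable {K L D G : MGraph.{u}}

/-- The square `m ∘ l = l₁ ∘ d` is a pullback (arguments ordered as in
`CategoryTheory.IsPullback`). -/
def IsPullback (l : GraphHom K L) (d : GraphHom K D) (m : GraphHom L G) (l₁ : GraphHom D G) :
    Prop :=
  m.comp l = l₁.comp d ∧ ∀ (K' : MGraph.{u}) (l' : GraphHom K' L) (d' : GraphHom K' D),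
    m.comp l' = l₁.comp d' → ∃! κ : GraphHom K' K, l.comp κ = l' ∧ d.comp κ = d'

def pointGraph : MGraph.{u} := ⟨PUnit, PEmpty, PEmpty.elim, PEmpty.elim⟩

def arrowGraph : MGraph.{u} := ⟨ULift Bool, PUnit, fun _ => ⟨false⟩, fun _ => ⟨true⟩⟩

def pointHomEquiv (X : MGraph.{u}) : X.N ≃ GraphHom pointGraph X where
  toFun v := ⟨fun _ => v, PEmpty.elim, fun e => e.elim, fun e => e.elim⟩
  invFun g := g.fN ⟨⟩
  left_inv _ := rfl
  right_inv _ := GraphHom.ext rfl (funext fun e => e.elim)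

def arrowHomEquiv (X : MGraph.{u}) : X.E ≃ GraphHom arrowGraph X where
  toFun e := ⟨fun b => cond b.down (X.tgt e) (X.src e), fun _ => e, fun _ => rfl, fun _ => rfl⟩
  invFun g := g.fE ⟨⟩
  left_inv _ := rfl
  right_inv g := GraphHom.ext (funext fun | ⟨false⟩ => g.hsrc ⟨⟩ | ⟨true⟩ => g.htgt ⟨⟩) rfl

theorem comp_pointHomEquiv {X Y : MGraph.{u}} (f : GraphHom X Y) (v : X.N) :
    f.comp (pointHomEquiv X v) = pointHomEquiv Y (f.fN v) :=
  GraphHom.ext rfl (funext fun e => e.elim)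

theorem comp_arrowHomEquiv {X Y : MGraph.{u}} (f : GraphHom X Y) (e : X.E) :
    f.comp (arrowHomEquiv X e) = arrowHomEquiv Y (f.fE e) :=
  GraphHom.ext (funext fun | ⟨false⟩ => (f.hsrc e).symm | ⟨true⟩ => (f.htgt e).symm) rfl

namespace IsPullback

variable {l : GraphHom K L} {d : GraphHom K D} {m : GraphHom L G} {l₁ : GraphHom D G}

theorem existsUnique_fN (hp : IsPullback l d m l₁) {v : D.N} {u : L.N}
    (h : l₁.fN v = m.fN u) : ∃! k : K.N, l.fN k = u ∧ d.fN k = v := by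
  refine (Equiv.existsUnique_congr (pointHomEquiv K) fun k => ?_).mpr
    (hp.2 _ _ _ (by rw [comp_pointHomEquiv, comp_pointHomEquiv, h]))
  simp only [comp_pointHomEquiv, (pointHomEquiv _).apply_eq_iff_eq]

theorem existsUnique_fE (hp : IsPullback l d m l₁) {e : D.E} {f : L.E}
    (h : l₁.fE e = m.fE f) : ∃! k : K.E, l.fE k = f ∧ d.fE k = e := by
  refine (Equiv.existsUnique_congr (arrowHomEquiv K) fun k => ?_).mpr
    (hp.2 _ _ _ (by rw [comp_arrowHomEquiv, comp_arrowHomEquiv, h]))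
  simp only [comp_arrowHomEquiv, (arrowHomEquiv _).apply_eq_iff_eq]

theorem fN_comm (hp : IsPullback l d m l₁) (k : K.N) : l₁.fN (d.fN k) = m.fN (l.fN k) :=
  (congrFun (congrArg GraphHom.fN hp.1) k).symm

theorem fE_comm (hp : IsPullback l d m l₁) (k : K.E) : l₁.fE (d.fE k) = m.fE (l.fE k) :=
  (congrFun (congrArg GraphHom.fE hp.1) k).symm

theorem injective_fN (hp : IsPullback l d m l₁) (hm : Injective m.fN) : Injective d.fN := by
  intro k k' hkk'
  have hl : l.fN k = l.fN k' := hm <| by rw [← hp.fN_comm, ← hp.fN_comm, hkk']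
  exact (hp.existsUnique_fN (hp.fN_comm k')).unique ⟨hl, hkk'⟩ ⟨rfl, rfl⟩

theorem injective_fE (hp : IsPullback l d m l₁) (hm : Injective m.fE) : Injective d.fE := by
  intro k k' hkk'
  have hl : l.fE k = l.fE k' := hm <| by rw [← hp.fE_comm, ← hp.fE_comm, hkk']
  exact (hp.existsUnique_fE (hp.fE_comm k')).unique ⟨hl, hkk'⟩ ⟨rfl, rfl⟩

end IsPullback

end Pullback

section SumGraph

variable {X Xbar Y : MGraph.{u}} {Xt : Type u} {xs xt : Xt → X.N ⊕ Xbar.N}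

theorem sumIncl_cancel_left {g h : GraphHom Y X}
    (hgh : (sumIncl X Xbar Xt xs xt).comp g = (sumIncl X Xbar Xt xs xt).comp h) : g = h :=
  GraphHom.cancel_left_of_injective Sum.inl_injective Sum.inl_injective hgh

theorem sumGraph_src_of_isLeft {x : X.E ⊕ Xbar.E ⊕ Xt} (hx : x.isLeft) :
    (sumGraph X Xbar Xt xs xt).src x = Sum.inl (X.src (x.getLeft hx)) := by
  obtain ⟨f, rfl⟩ := Sum.isLeft_iff.mp hx
  rfl

theorem sumGraph_tgt_of_isLeft {x : X.E ⊕ Xbar.E ⊕ Xt} (hx : x.isLeft) :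
    (sumGraph X Xbar Xt xs xt).tgt x = Sum.inl (X.tgt (x.getLeft hx)) := by
  obtain ⟨f, rfl⟩ := Sum.isLeft_iff.mp hx
  rfl

def GraphHom.corestrictLeft (g : GraphHom Y (sumGraph X Xbar Xt xs xt))
    (hN : ∀ y, (g.fN y).isLeft) (hE : ∀ e, (g.fE e).isLeft) : GraphHom Y X where
  fN y := (g.fN y).getLeft (hN y)
  fE e := (g.fE e).getLeft (hE e)
  hsrc e := Sum.inl_injective <| (sumGraph_src_of_isLeft (hE e)).symm.trans
    ((g.hsrc e).trans (Sum.inl_getLeft _ _).symm)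
  htgt e := Sum.inl_injective <| (sumGraph_tgt_of_isLeft (hE e)).symm.trans
    ((g.htgt e).trans (Sum.inl_getLeft _ _).symm)

theorem sumIncl_comp_corestrictLeft (g : GraphHom Y (sumGraph X Xbar Xt xs xt))
    (hN : ∀ y, (g.fN y).isLeft) (hE : ∀ e, (g.fE e).isLeft) :
    (sumIncl X Xbar Xt xs xt).comp (g.corestrictLeft hN hE) = g :=
  GraphHom.ext (funext fun y => Sum.inl_getLeft _ (hN y))
    (funext fun e => Sum.inl_getLeft _ (hE e))

end SumGraph

section Existence

variable {K L Lbar Kbar : MGraph.{u}} {l : GraphHom K L} {Lt Kt : Type u}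
  {ls lt : Lt → L.N ⊕ Lbar.N} {lbar : GraphHom Kbar Lbar} {ks kt : Kt → K.N ⊕ Kbar.N}
  {ltil : Kt → Lt}

theorem isPullback_sumIncl (hls : ∀ e, ls (ltil e) = Sum.map l.fN lbar.fN (ks e))
    (hlt : ∀ e, lt (ltil e) = Sum.map l.fN lbar.fN (kt e)) :
    IsPullback l (sumIncl K Kbar Kt ks kt) (sumIncl L Lbar Lt ls lt)
      (pbcMor K L Lbar l Lt ls lt Kbar lbar Kt ks kt ltil hls hlt) := by
  refine ⟨rfl, fun K' l' d' h => ?_⟩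
  have hN : ∀ x, (d'.fN x).isLeft := fun x =>
    (Sum.isLeft_map l.fN lbar.fN (d'.fN x)).symm.trans
      (congrArg Sum.isLeft (congrFun (congrArg GraphHom.fN h) x).symm)
  have hE : ∀ e, (d'.fE e).isLeft := fun e =>
    (Sum.isLeft_map l.fE (Sum.map lbar.fE ltil) (d'.fE e)).symm.trans
      (congrArg Sum.isLeft (congrFun (congrArg GraphHom.fE h) e).symm)
  let κ := d'.corestrictLeft hN hE
  have hκ : (sumIncl K Kbar Kt ks kt).comp κ = d' := sumIncl_comp_corestrictLeft d' hN hE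
  have hlκ : (sumIncl L Lbar Lt ls lt).comp (l.comp κ) = (sumIncl L Lbar Lt ls lt).comp l' :=
    calc (sumIncl L Lbar Lt ls lt).comp (l.comp κ)
        = (pbcMor K L Lbar l Lt ls lt Kbar lbar Kt ks kt ltil hls hlt).comp
            ((sumIncl K Kbar Kt ks kt).comp κ) := rfl
      _ = (sumIncl L Lbar Lt ls lt).comp l' := by rw [hκ, h]
  exact ⟨κ, ⟨sumIncl_cancel_left hlκ, hκ⟩,
    fun κ' hκ' => sumIncl_cancel_left (hκ'.2.trans hκ.symm)⟩

end Existence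

theorem injective_fiberVal {α β γ : Type*} {f : β → α} (hf : Injective f) (q : γ → α) :
    Injective fun x : Σ b, {c // q c = f b} => x.2.1 := by
  rintro ⟨b, c, hc⟩ ⟨b', c', hc'⟩ (rfl : c = c')
  obtain rfl := hf (hc.symm.trans hc')
  rfl

section Decomposition

variable {K L Lbar D : MGraph.{u}} {Lt : Type u} {ls lt : Lt → L.N ⊕ Lbar.N}

/-- `barGraph l₁` and `linkEdges l₁` are the `K̄` and `K̃` of the decomposition of `D`: the parts
of `D` over `L̄` and over `L̃`, as sigma types of fibres of `l₁`. -/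
def barGraph (l₁ : GraphHom D (sumGraph L Lbar Lt ls lt)) : MGraph.{u} where
  N := Σ u : Lbar.N, {v : D.N // l₁.fN v = Sum.inr u}
  E := Σ f : Lbar.E, {e : D.E // l₁.fE e = Sum.inr (Sum.inl f)}
  src x := ⟨Lbar.src x.1, D.src x.2.1, by rw [← l₁.hsrc, x.2.2]; rfl⟩
  tgt x := ⟨Lbar.tgt x.1, D.tgt x.2.1, by rw [← l₁.htgt, x.2.2]; rfl⟩

def barHom (l₁ : GraphHom D (sumGraph L Lbar Lt ls lt)) : GraphHom (barGraph l₁) Lbar :=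
  ⟨Sigma.fst, Sigma.fst, fun _ => rfl, fun _ => rfl⟩

def linkEdges (l₁ : GraphHom D (sumGraph L Lbar Lt ls lt)) : Type u :=
  Σ t : Lt, {e : D.E // l₁.fE e = Sum.inr (Sum.inr t)}

variable {l : GraphHom K L} {d : GraphHom K D} {l₁ : GraphHom D (sumGraph L Lbar Lt ls lt)}

variable (d l₁) in
def nodeMap : K.N ⊕ (barGraph l₁).N → D.N :=
  Sum.elim d.fN fun x => x.2.1

variable (d l₁) in
def edgeMap : K.E ⊕ (barGraph l₁).E ⊕ linkEdges l₁ → D.E :=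
  Sum.elim d.fE (Sum.elim (fun x => x.2.1) fun x => x.2.1)

theorem bijective_nodeMap (hp : IsPullback l d (sumIncl L Lbar Lt ls lt) l₁) :
    Bijective (nodeMap d l₁) := by
  refine ⟨(hp.injective_fN Sum.inl_injective).sumElim (injective_fiberVal Sum.inr_injective _)
    ?_, ?_⟩
  · rintro k ⟨u, v, hv⟩ rfl
    exact Sum.inl_ne_inr ((hp.fN_comm k).symm.trans hv)
  · intro v
    rcases hv : l₁.fN v with u | u
    · obtain ⟨k, -, hk⟩ := (hp.existsUnique_fN (u := u) hv).exists
      exact ⟨Sum.inl k, hk⟩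
    · exact ⟨Sum.inr ⟨u, v, hv⟩, rfl⟩

theorem bijective_edgeMap (hp : IsPullback l d (sumIncl L Lbar Lt ls lt) l₁) :
    Bijective (edgeMap d l₁) := by
  refine ⟨(hp.injective_fE Sum.inl_injective).sumElim
    ((injective_fiberVal (Sum.inr_injective.comp Sum.inl_injective) _).sumElim
      (injective_fiberVal (Sum.inr_injective.comp Sum.inr_injective) _) ?_) ?_, ?_⟩
  · rintro ⟨f, e, he⟩ ⟨t, _, ht⟩ rfl
    exact Sum.inl_ne_inr (Sum.inr_injective (he.symm.trans ht))
  · rintro k (⟨f, e, he⟩ | ⟨t, e, he⟩) rfl <;>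
      exact Sum.inl_ne_inr ((hp.fE_comm k).symm.trans he)
  · intro e
    rcases he : l₁.fE e with f | f | t
    · obtain ⟨k, -, hk⟩ := (hp.existsUnique_fE (f := f) he).exists
      exact ⟨Sum.inl k, hk⟩
    · exact ⟨Sum.inr (Sum.inl ⟨f, e, he⟩), rfl⟩
    · exact ⟨Sum.inr (Sum.inr ⟨t, e, he⟩), rfl⟩

noncomputable def linkSrc (hp : IsPullback l d (sumIncl L Lbar Lt ls lt) l₁)
    (x : linkEdges l₁) : K.N ⊕ (barGraph l₁).N :=
  (Equiv.ofBijective _ (bijective_nodeMap hp)).symm (D.src x.2.1)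

noncomputable def linkTgt (hp : IsPullback l d (sumIncl L Lbar Lt ls lt) l₁)
    (x : linkEdges l₁) : K.N ⊕ (barGraph l₁).N :=
  (Equiv.ofBijective _ (bijective_nodeMap hp)).symm (D.tgt x.2.1)

theorem fN_nodeMap (hp : IsPullback l d (sumIncl L Lbar Lt ls lt) l₁)
    (y : K.N ⊕ (barGraph l₁).N) : l₁.fN (nodeMap d l₁ y) = Sum.map l.fN (barHom l₁).fN y := by
  rcases y with k | ⟨u, v, hv⟩
  · exact hp.fN_comm k
  · exact hv

theorem ls_linkSrc (hp : IsPullback l d (sumIncl L Lbar Lt ls lt) l₁) (x : linkEdges l₁) :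
    ls x.1 = Sum.map l.fN (barHom l₁).fN (linkSrc hp x) := by
  have hsrc : ls x.1 = l₁.fN (D.src x.2.1) := by rw [← l₁.hsrc, x.2.2]; rfl
  exact hsrc.trans <| (congrArg l₁.fN (Equiv.ofBijective_apply_symm_apply _ _ _).symm).trans
    (fN_nodeMap hp _)

theorem lt_linkTgt (hp : IsPullback l d (sumIncl L Lbar Lt ls lt) l₁) (x : linkEdges l₁) :
    lt x.1 = Sum.map l.fN (barHom l₁).fN (linkTgt hp x) := by
  have htgt : lt x.1 = l₁.fN (D.tgt x.2.1) := by rw [← l₁.htgt, x.2.2]; rfl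
  exact htgt.trans <| (congrArg l₁.fN (Equiv.ofBijective_apply_symm_apply _ _ _).symm).trans
    (fN_nodeMap hp _)

noncomputable def assemble (hp : IsPullback l d (sumIncl L Lbar Lt ls lt) l₁) :
    GraphHom (sumGraph K (barGraph l₁) (linkEdges l₁) (linkSrc hp) (linkTgt hp)) D where
  fN := nodeMap d l₁
  fE := edgeMap d l₁
  hsrc
    | .inl k => d.hsrc k
    | .inr (.inl _) => rfl
    | .inr (.inr x) => (Equiv.ofBijective_apply_symm_apply _ _ (D.src x.2.1)).symm
  htgt
    | .inl k => d.htgt k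
    | .inr (.inl _) => rfl
    | .inr (.inr x) => (Equiv.ofBijective_apply_symm_apply _ _ (D.tgt x.2.1)).symm

theorem assemble_comp_sumIncl (hp : IsPullback l d (sumIncl L Lbar Lt ls lt) l₁) :
    (assemble hp).comp (sumIncl _ _ _ _ _) = d :=
  rfl

theorem pbcMor_eq_comp_assemble (hp : IsPullback l d (sumIncl L Lbar Lt ls lt) l₁) :
    pbcMor K L Lbar l Lt ls lt (barGraph l₁) (barHom l₁) (linkEdges l₁) (linkSrc hp)
      (linkTgt hp) Sigma.fst (ls_linkSrc hp) (lt_linkTgt hp) = l₁.comp (assemble hp) :=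
  GraphHom.ext (funext fun y => (fN_nodeMap hp y).symm) <| funext fun
    | .inl k => (hp.fE_comm k).symm
    | .inr (.inl x) => x.2.2.symm
    | .inr (.inr x) => x.2.2.symm

end Decomposition

theorem graph_pullback_complements (K L Lbar : MGraph.{u}) (l : GraphHom K L)
    (Lt : Type u) (ls lt : Lt → L.N ⊕ Lbar.N) :
    -- (1) each square of the given form is a pullback complement
    (∀ (Kbar : MGraph.{u}) (lbar : GraphHom Kbar Lbar)
       (Kt : Type u) (ks kt : Kt → K.N ⊕ Kbar.N) (ltil : Kt → Lt)
       (hls : ∀ e, ls (ltil e) = Sum.map l.fN lbar.fN (ks e))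
       (hlt : ∀ e, lt (ltil e) = Sum.map l.fN lbar.fN (kt e)),
       ((sumIncl L Lbar Lt ls lt).comp l =
          (pbcMor K L Lbar l Lt ls lt Kbar lbar Kt ks kt ltil hls hlt).comp
            (sumIncl K Kbar Kt ks kt)) ∧
       ∀ (K' : MGraph.{u}) (l' : GraphHom K' L)
         (d' : GraphHom K' (sumGraph K Kbar Kt ks kt)),
         (sumIncl L Lbar Lt ls lt).comp l' =
           (pbcMor K L Lbar l Lt ls lt Kbar lbar Kt ks kt ltil hls hlt).comp d' →
         ∃! κ : GraphHom K' K,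
           l.comp κ = l' ∧ (sumIncl K Kbar Kt ks kt).comp κ = d') ∧
    -- (2) every pullback complement of (m, l) has this form up to isomorphism
    (∀ (D' : MGraph.{u}) (d' : GraphHom K D')
       (l₁' : GraphHom D' (sumGraph L Lbar Lt ls lt)),
       ((sumIncl L Lbar Lt ls lt).comp l = l₁'.comp d') →
       (∀ (K' : MGraph.{u}) (l' : GraphHom K' L) (d'' : GraphHom K' D'),
         (sumIncl L Lbar Lt ls lt).comp l' = l₁'.comp d'' →
         ∃! κ : GraphHom K' K, l.comp κ = l' ∧ d'.comp κ = d'') →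
       ∃ (Kbar : MGraph.{u}) (lbar : GraphHom Kbar Lbar)
         (Kt : Type u) (ks kt : Kt → K.N ⊕ Kbar.N) (ltil : Kt → Lt)
         (hls : ∀ e, ls (ltil e) = Sum.map l.fN lbar.fN (ks e))
         (hlt : ∀ e, lt (ltil e) = Sum.map l.fN lbar.fN (kt e))
         (φ : GraphHom D' (sumGraph K Kbar Kt ks kt))
         (ψ : GraphHom (sumGraph K Kbar Kt ks kt) D'),
         ψ.comp φ = GraphHom.id D' ∧
         φ.comp ψ = GraphHom.id (sumGraph K Kbar Kt ks kt) ∧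
         φ.comp d' = sumIncl K Kbar Kt ks kt ∧
         (pbcMor K L Lbar l Lt ls lt Kbar lbar Kt ks kt ltil hls hlt).comp φ
           = l₁') := by
  refine ⟨fun Kbar lbar Kt ks kt ltil hls hlt => isPullback_sumIncl hls hlt, ?_⟩
  intro D' d' l₁' hsq hpb
  have hp : IsPullback l d' (sumIncl L Lbar Lt ls lt) l₁' := ⟨hsq, hpb⟩
  let ψ := assemble hp
  have hN : Bijective ψ.fN := bijective_nodeMap hp
  have hE : Bijective ψ.fE := bijective_edgeMap hp
  exact ⟨_, _, _, _, _, _, ls_linkSrc hp, lt_linkTgt hp, ψ.invOfBijective hN hE, ψ,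
    ψ.comp_invOfBijective hN hE, ψ.invOfBijective_comp hN hE,
    ψ.invOfBijective_comp_eq hN hE (assemble_comp_sumIncl hp),
    GraphHom.comp_invOfBijective_eq hN hE (pbcMor_eq_comp_assemble hp)⟩
end

section
/- Let l : 𝐊 → 𝐋 be a morphism and m : 𝐋 → 𝐆 a matching of polarized graphs (a monomorphism strictly reflecting polarizations). Then in any pullback complement of (m, l) in the category of polarized graphs, the induced morphism d : 𝐊 → 𝐃 is itself a matching of polarized graphs. -/
universe u

/-- A polarization of a graph: distinguished node subsets `N⁺`, `N⁻` and a
distinguished edge subset `E⋆` such that every edge in `E⋆` has its source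
in `N⁺` and its target in `N⁻`. -/
structure Polarization (X : MGraph.{u}) where
  Np : Set X.N
  Nm : Set X.N
  Es : Set X.E
  hs : ∀ e ∈ Es, X.src e ∈ Np
  ht : ∀ e ∈ Es, X.tgt e ∈ Nm

/-- A polarized graph: a graph together with a polarization. -/
structure PGraph : Type (u + 1) where
  toGraph : MGraph.{u}
  pol : Polarization toGraph

/-- A morphism of polarized graphs: a graph morphism preserving the three
distinguished subsets. -/
structure PGraphHom (X Y : PGraph.{u}) where
  toHom : GraphHom X.toGraph Y.toGraph
  hNp : ∀ n ∈ X.pol.Np, toHom.fN n ∈ Y.pol.Np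
  hNm : ∀ n ∈ X.pol.Nm, toHom.fN n ∈ Y.pol.Nm
  hEs : ∀ e ∈ X.pol.Es, toHom.fE e ∈ Y.pol.Es

def PGraphHom.id (X : PGraph.{u}) : PGraphHom X X :=
  ⟨GraphHom.id X.toGraph, fun _ h => h, fun _ h => h, fun _ h => h⟩

/-- `g.comp f` is the composite `g ∘ f`. -/
def PGraphHom.comp {X Y Z : PGraph.{u}} (g : PGraphHom Y Z) (f : PGraphHom X Y) :
    PGraphHom X Z :=
  ⟨g.toHom.comp f.toHom,
    fun n h => g.hNp _ (f.hNp n h),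
    fun n h => g.hNm _ (f.hNm n h),
    fun e h => g.hEs _ (f.hEs e h)⟩

/-- A matching of polarized graphs: a monomorphism (equivalently: both
components injective) which strictly reflects the polarization, i.e.
`f(X^pol) = f(X) ∩ Y^pol`. -/
def Matching {X Y : PGraph.{u}} (f : PGraphHom X Y) : Prop :=
  Function.Injective f.toHom.fN ∧ Function.Injective f.toHom.fE ∧
  (∀ n, f.toHom.fN n ∈ Y.pol.Np ↔ n ∈ X.pol.Np) ∧
  (∀ n, f.toHom.fN n ∈ Y.pol.Nm ↔ n ∈ X.pol.Nm) ∧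
  (∀ e, f.toHom.fE e ∈ Y.pol.Es ↔ e ∈ X.pol.Es)

/-
The pullback `K` of `m` along `l₁` is tested with tiny probe graphs: a single node or a single
edge, polarized or not. Maps from a probe into `K` are single nodes or edges of `K`, so the
universal property says that `K` is, elementwise, the set of pairs of `L × D` agreeing in `G`,
with the polarization of both components. Hence `(l, d)` is jointly injective and jointly
reflects polarization; since `m` is injective and reflects polarization, `d` alone does both.
-/

def PGraph.point (p q : Prop) : PGraph.{u} where
  toGraph := ⟨PUnit, PEmpty, PEmpty.elim, PEmpty.elim⟩
  pol := ⟨{_x | p}, {_x | q}, ∅, fun e => e.elim, fun e => e.elim⟩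

def PGraph.arrow (p : Prop) : PGraph.{u} where
  toGraph := ⟨ULift Bool, PUnit, fun _ => ⟨true⟩, fun _ => ⟨false⟩⟩
  pol := ⟨{b | p ∧ b = ⟨true⟩}, {b | p ∧ b = ⟨false⟩}, {_x | p},
    fun _ h => ⟨h, rfl⟩, fun _ h => ⟨h, rfl⟩⟩

namespace PGraphHom

lemma ext' {X Y : PGraph.{u}} {f g : PGraphHom X Y}
    (hN : f.toHom.fN = g.toHom.fN) (hE : f.toHom.fE = g.toHom.fE) : f = g := by
  cases f; cases g; congr 1; exact GraphHom.ext hN hE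

lemma comp_assoc {W X Y Z : PGraph.{u}} (h : PGraphHom Y Z) (g : PGraphHom X Y)
    (f : PGraphHom W X) : (h.comp g).comp f = h.comp (g.comp f) :=
  rfl

def ofPoint {p q : Prop} (X : PGraph.{u}) (x : X.toGraph.N) (hp : p → x ∈ X.pol.Np)
    (hq : q → x ∈ X.pol.Nm) : PGraphHom (PGraph.point p q) X where
  toHom := ⟨fun _ => x, PEmpty.elim, fun e => e.elim, fun e => e.elim⟩
  hNp _ := hp
  hNm _ := hq
  hEs e _ := e.elim

def ofEdge {p : Prop} (X : PGraph.{u}) (e : X.toGraph.E) (he : p → e ∈ X.pol.Es) :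
    PGraphHom (PGraph.arrow p) X where
  toHom := ⟨fun b => cond b.down (X.toGraph.src e) (X.toGraph.tgt e), fun _ => e,
    fun _ => rfl, fun _ => rfl⟩
  hNp _ := fun ⟨hp, hb⟩ => hb ▸ X.pol.hs e (he hp)
  hNm _ := fun ⟨hp, hb⟩ => hb ▸ X.pol.ht e (he hp)
  hEs _ := he

variable {p q : Prop} {X Y : PGraph.{u}}

lemma ofPoint_congr {x x' : X.toGraph.N} (h : x = x') (hp : p → x ∈ X.pol.Np)
    (hq : q → x ∈ X.pol.Nm) (hp' : p → x' ∈ X.pol.Np) (hq' : q → x' ∈ X.pol.Nm) :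
    ofPoint X x hp hq = ofPoint X x' hp' hq' := by
  subst h; rfl

lemma ofEdge_congr {e e' : X.toGraph.E} (h : e = e') (he : p → e ∈ X.pol.Es)
    (he' : p → e' ∈ X.pol.Es) : ofEdge X e he = ofEdge X e' he' := by
  subst h; rfl

lemma comp_ofPoint (f : PGraphHom X Y) (x : X.toGraph.N) (hp : p → x ∈ X.pol.Np)
    (hq : q → x ∈ X.pol.Nm) :
    f.comp (ofPoint X x hp hq)
      = ofPoint Y (f.toHom.fN x) (fun h => f.hNp x (hp h)) (fun h => f.hNm x (hq h)) :=
  ext' rfl (funext fun e => e.elim)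

lemma comp_ofEdge (f : PGraphHom X Y) (e : X.toGraph.E) (he : p → e ∈ X.pol.Es) :
    f.comp (ofEdge X e he) = ofEdge Y (f.toHom.fE e) (fun h => f.hEs e (he h)) := by
  refine ext' (funext fun ⟨b⟩ => ?_) rfl
  cases b
  · exact (f.toHom.htgt e).symm
  · exact (f.toHom.hsrc e).symm

structure IsPullback {K L G D : PGraph.{u}} (l : PGraphHom K L) (d : PGraphHom K D)
    (m : PGraphHom L G) (l₁ : PGraphHom D G) : Prop where
  w : m.comp l = l₁.comp d
  isLimit : ∀ (K' : PGraph.{u}) (l' : PGraphHom K' L) (d' : PGraphHom K' D),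
    m.comp l' = l₁.comp d' → ∃! κ : PGraphHom K' K, l.comp κ = l' ∧ d.comp κ = d'

namespace IsPullback

variable {K L G D : PGraph.{u}} {l : PGraphHom K L} {d : PGraphHom K D}
  {m : PGraphHom L G} {l₁ : PGraphHom D G}

lemma w_node (hsq : IsPullback l d m l₁) (k : K.toGraph.N) :
    m.toHom.fN (l.toHom.fN k) = l₁.toHom.fN (d.toHom.fN k) :=
  congrArg (fun f => f.toHom.fN k) hsq.w

lemma w_edge (hsq : IsPullback l d m l₁) (e : K.toGraph.E) :
    m.toHom.fE (l.toHom.fE e) = l₁.toHom.fE (d.toHom.fE e) :=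
  congrArg (fun f => f.toHom.fE e) hsq.w

lemma hom_ext (hsq : IsPullback l d m l₁) {κ₁ κ₂ : PGraphHom X K}
    (hl : l.comp κ₁ = l.comp κ₂) (hd : d.comp κ₁ = d.comp κ₂) : κ₁ = κ₂ := by
  have hcone : m.comp (l.comp κ₁) = l₁.comp (d.comp κ₁) := by
    rw [← comp_assoc, hsq.w, comp_assoc]
  exact (hsq.isLimit X _ _ hcone).unique ⟨rfl, rfl⟩ ⟨hl.symm, hd.symm⟩

lemma node_ext (hsq : IsPullback l d m l₁) {k₁ k₂ : K.toGraph.N}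
    (hl : l.toHom.fN k₁ = l.toHom.fN k₂) (hd : d.toHom.fN k₁ = d.toHom.fN k₂) : k₁ = k₂ := by
  have h := hsq.hom_ext (κ₁ := ofPoint K k₁ False.elim False.elim)
    (κ₂ := ofPoint K k₂ False.elim False.elim)
    (by rw [comp_ofPoint, comp_ofPoint]; exact ofPoint_congr hl _ _ _ _)
    (by rw [comp_ofPoint, comp_ofPoint]; exact ofPoint_congr hd _ _ _ _)
  exact congrArg (fun κ => κ.toHom.fN PUnit.unit) h

lemma edge_ext (hsq : IsPullback l d m l₁) {e₁ e₂ : K.toGraph.E}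
    (hl : l.toHom.fE e₁ = l.toHom.fE e₂) (hd : d.toHom.fE e₁ = d.toHom.fE e₂) : e₁ = e₂ := by
  have h := hsq.hom_ext (κ₁ := ofEdge K e₁ False.elim) (κ₂ := ofEdge K e₂ False.elim)
    (by rw [comp_ofEdge, comp_ofEdge]; exact ofEdge_congr hl _ _)
    (by rw [comp_ofEdge, comp_ofEdge]; exact ofEdge_congr hd _ _)
  exact congrArg (fun κ => κ.toHom.fE PUnit.unit) h

lemma exists_ofPoint_eq (hsq : IsPullback l d m l₁) (k : K.toGraph.N)
    (hpL : p → l.toHom.fN k ∈ L.pol.Np) (hqL : q → l.toHom.fN k ∈ L.pol.Nm)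
    (hpD : p → d.toHom.fN k ∈ D.pol.Np) (hqD : q → d.toHom.fN k ∈ D.pol.Nm) :
    ∃ κ : PGraphHom (PGraph.point p q) K, κ.toHom.fN PUnit.unit = k := by
  obtain ⟨κ, ⟨hκl, hκd⟩, -⟩ := hsq.isLimit _ (ofPoint L _ hpL hqL) (ofPoint D _ hpD hqD)
    (by rw [comp_ofPoint, comp_ofPoint]; exact ofPoint_congr (hsq.w_node k) _ _ _ _)
  exact ⟨κ, hsq.node_ext (congrArg (fun f => f.toHom.fN PUnit.unit) hκl)
    (congrArg (fun f => f.toHom.fN PUnit.unit) hκd)⟩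

lemma mem_Np (hsq : IsPullback l d m l₁) {k : K.toGraph.N} (hl : l.toHom.fN k ∈ L.pol.Np)
    (hd : d.toHom.fN k ∈ D.pol.Np) : k ∈ K.pol.Np := by
  obtain ⟨κ, rfl⟩ := hsq.exists_ofPoint_eq (p := True) (q := False) k
    (fun _ => hl) False.elim (fun _ => hd) False.elim
  exact κ.hNp _ trivial

lemma mem_Nm (hsq : IsPullback l d m l₁) {k : K.toGraph.N} (hl : l.toHom.fN k ∈ L.pol.Nm)
    (hd : d.toHom.fN k ∈ D.pol.Nm) : k ∈ K.pol.Nm := by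
  obtain ⟨κ, rfl⟩ := hsq.exists_ofPoint_eq (p := False) (q := True) k
    False.elim (fun _ => hl) False.elim (fun _ => hd)
  exact κ.hNm _ trivial

lemma mem_Es (hsq : IsPullback l d m l₁) {e : K.toGraph.E} (hl : l.toHom.fE e ∈ L.pol.Es)
    (hd : d.toHom.fE e ∈ D.pol.Es) : e ∈ K.pol.Es := by
  obtain ⟨κ, ⟨hκl, hκd⟩, -⟩ := hsq.isLimit (PGraph.arrow True) (ofEdge L _ fun _ => hl)
    (ofEdge D _ fun _ => hd)
    (by rw [comp_ofEdge, comp_ofEdge]; exact ofEdge_congr (hsq.w_edge e) _ _)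
  have hκe : κ.toHom.fE PUnit.unit = e :=
    hsq.edge_ext (congrArg (fun f => f.toHom.fE PUnit.unit) hκl)
      (congrArg (fun f => f.toHom.fE PUnit.unit) hκd)
  exact hκe ▸ κ.hEs _ trivial

end IsPullback

end PGraphHom

theorem pullback_complement_matching {K L G D : PGraph.{u}}
    (l : PGraphHom K L) (m : PGraphHom L G) (hm : Matching m)
    (d : PGraphHom K D) (l₁ : PGraphHom D G)
    (hcomm : m.comp l = l₁.comp d)
    (hpb : ∀ (K' : PGraph.{u}) (l' : PGraphHom K' L) (d' : PGraphHom K' D),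
      m.comp l' = l₁.comp d' →
      ∃! κ : PGraphHom K' K, l.comp κ = l' ∧ d.comp κ = d') :
    Matching d := by
  obtain ⟨hmN, hmE, hmNp, hmNm, hmEs⟩ := hm
  have hsq : l.IsPullback d m l₁ := ⟨hcomm, hpb⟩
  refine ⟨fun k₁ k₂ h => hsq.node_ext (hmN ?_) h, fun e₁ e₂ h => hsq.edge_ext (hmE ?_) h,
    fun k => ⟨fun h => hsq.mem_Np ((hmNp _).1 ?_) h, d.hNp k⟩,
    fun k => ⟨fun h => hsq.mem_Nm ((hmNm _).1 ?_) h, d.hNm k⟩,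
    fun e => ⟨fun h => hsq.mem_Es ((hmEs _).1 ?_) h, d.hEs e⟩⟩
  · rw [hsq.w_node, hsq.w_node, h]
  · rw [hsq.w_edge, hsq.w_edge, h]
  · exact hsq.w_node k ▸ l₁.hNp _ h
  · exact hsq.w_node k ▸ l₁.hNm _ h
  · exact hsq.w_edge e ▸ l₁.hEs _ h
end
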